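/- Let R = ℤ/4[a^{±1}, u, v, e]/(2e, e²v − 2au). Then localizing R at the element e (i.e. inverting e) gives R[e^{−1}] ≅ ℤ/2[u, a^{±1}, e^{±1}], and the image of v in R[e^{−1}] is 0. -/

import Mathlib

set_option synthInstance.maxHeartbeats 1000000
set_option maxHeartbeats 1000000
open MvPolynomial

/-- The ring `ℤ/4[a, u, v, e]/(2e, e²v − 2au)` (variables `0,1,2,3 = a,u,v,e`). -/
noncomputable abbrev tateBase10 : Type :=
  MvPolynomial (Fin 4) (ZMod 4) ⧸ Ideal.span
    {(2 : MvPolynomial (Fin 4) (ZMod 4)) * X 3, (X 3) ^ 2 * X 2 - 2 * X 0 * X 1}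

noncomputable def tA10 : tateBase10 := Ideal.Quotient.mk _ (X 0)
noncomputable def tU10 : tateBase10 := Ideal.Quotient.mk _ (X 1)
noncomputable def tV10 : tateBase10 := Ideal.Quotient.mk _ (X 2)
noncomputable def tE10 : tateBase10 := Ideal.Quotient.mk _ (X 3)

/-- Inverting `a` and `e` in `ℤ/4[a,u,v,e]/(2e, e²v − 2au)` gives
`R[e⁻¹]` where `R = ℤ/4[a^{±}, u, v, e]/(2e, e²v − 2au)`. -/
noncomputable def locAE : Submonoid tateBase10 := Submonoid.closure {tA10, tE10}

-- ### the target ring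
abbrev LL : Type := AddMonoidAlgebra (ZMod 2) (ℕ × ℤ × ℤ)

open AddMonoidAlgebra

noncomputable def elU : LL := AddMonoidAlgebra.single ((1 : ℕ), (0 : ℤ), (0 : ℤ)) 1
noncomputable def elA : LL := AddMonoidAlgebra.single ((0 : ℕ), (1 : ℤ), (0 : ℤ)) 1
noncomputable def elE : LL := AddMonoidAlgebra.single ((0 : ℕ), (0 : ℤ), (1 : ℤ)) 1

noncomputable def unA : LLˣ :=
  ⟨elA, AddMonoidAlgebra.single ((0 : ℕ), (-1 : ℤ), (0 : ℤ)) 1,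
    by simp [elA, AddMonoidAlgebra.single_mul_single, AddMonoidAlgebra.one_def, Prod.ext_iff]; rfl,
    by simp [elA, AddMonoidAlgebra.single_mul_single, AddMonoidAlgebra.one_def, Prod.ext_iff]; rfl⟩

noncomputable def unE : LLˣ :=
  ⟨elE, AddMonoidAlgebra.single ((0 : ℕ), (0 : ℤ), (-1 : ℤ)) 1,
    by simp [elE, AddMonoidAlgebra.single_mul_single, AddMonoidAlgebra.one_def, Prod.ext_iff]; rfl,
    by simp [elE, AddMonoidAlgebra.single_mul_single, AddMonoidAlgebra.one_def, Prod.ext_iff]; rfl⟩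

lemma unA_zpow (i : ℤ) :
    ((unA ^ i : LLˣ) : LL) = AddMonoidAlgebra.single ((0 : ℕ), i, (0 : ℤ)) 1 := by
  induction i using Int.induction_on with
  | zero => simp [AddMonoidAlgebra.one_def]; rfl
  | succ k ih =>
      rw [zpow_add_one, Units.val_mul, ih]
      show _ * elA = _
      simp [elA, AddMonoidAlgebra.single_mul_single, Prod.ext_iff]
  | pred k ih =>
      rw [show (-(k : ℤ) - 1) = (-(k:ℤ)) - 1 by ring, zpow_sub_one, Units.val_mul, ih]
      show _ * AddMonoidAlgebra.single ((0 : ℕ), (-1 : ℤ), (0 : ℤ)) 1 = _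
      simp [AddMonoidAlgebra.single_mul_single, Prod.ext_iff, sub_eq_add_neg]

lemma unE_zpow (j : ℤ) :
    ((unE ^ j : LLˣ) : LL) = AddMonoidAlgebra.single ((0 : ℕ), (0 : ℤ), j) 1 := by
  induction j using Int.induction_on with
  | zero => simp [AddMonoidAlgebra.one_def]; rfl
  | succ k ih =>
      rw [zpow_add_one, Units.val_mul, ih]
      show _ * elE = _
      simp [elE, AddMonoidAlgebra.single_mul_single, Prod.ext_iff]
  | pred k ih =>
      rw [show (-(k : ℤ) - 1) = (-(k:ℤ)) - 1 by ring, zpow_sub_one, Units.val_mul, ih]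
      show _ * AddMonoidAlgebra.single ((0 : ℕ), (0 : ℤ), (-1 : ℤ)) 1 = _
      simp [AddMonoidAlgebra.single_mul_single, Prod.ext_iff, sub_eq_add_neg]

lemma elU_pow (n : ℕ) :
    elU ^ n = AddMonoidAlgebra.single ((n : ℕ), (0 : ℤ), (0 : ℤ)) 1 := by
  simp [elU, AddMonoidAlgebra.single_pow, Prod.ext_iff]

lemma two_LL : (2 : LL) = 0 := by
  calc (2:LL) = algebraMap (ZMod 2) LL 2 := (map_ofNat _ 2).symm
    _ = algebraMap (ZMod 2) LL 0 := by congr 1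
    _ = 0 := map_zero _

-- ### the map R → LL
noncomputable def phi0 : MvPolynomial (Fin 4) (ZMod 4) →+* LL :=
  MvPolynomial.eval₂Hom
    ((algebraMap (ZMod 2) LL).comp (ZMod.castHom (show (2:ℕ) ∣ 4 by norm_num) (ZMod 2)))
    ![elA, elU, 0, elE]

lemma phi0_ker : ∀ p ∈ Ideal.span
    ({(2 : MvPolynomial (Fin 4) (ZMod 4)) * X 3, (X 3) ^ 2 * X 2 - 2 * X 0 * X 1} :
      Set (MvPolynomial (Fin 4) (ZMod 4))), phi0 p = 0 := by
  intro p hp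
  have hle : Ideal.span
      ({(2 : MvPolynomial (Fin 4) (ZMod 4)) * X 3, (X 3) ^ 2 * X 2 - 2 * X 0 * X 1} :
        Set (MvPolynomial (Fin 4) (ZMod 4))) ≤ RingHom.ker phi0 := by
    rw [Ideal.span_le]
    rintro q (rfl | rfl) <;>
      simp [RingHom.mem_ker, phi0, map_ofNat, two_LL]
  exact hle hp

noncomputable def phib : tateBase10 →+* LL :=
  Ideal.Quotient.lift _ phi0 phi0_ker

lemma phib_A : phib tA10 = elA := by simp [phib, tA10, phi0]
lemma phib_U : phib tU10 = elU := by simp [phib, tU10, phi0]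
lemma phib_V : phib tV10 = 0 := by simp [phib, tV10, phi0]
lemma phib_E : phib tE10 = elE := by simp [phib, tE10, phi0]

lemma phib_units : ∀ y : locAE, IsUnit (phib (y : tateBase10)) := by
  rintro ⟨y, hy⟩
  induction hy using Submonoid.closure_induction with
  | mem x hx =>
      rcases hx with rfl | rfl
      · exact ⟨unA, phib_A.symm⟩
      · exact ⟨unE, phib_E.symm⟩
  | one => simp
  | mul x y hx hy ihx ihy => simpa [map_mul] using ihx.mul ihy

noncomputable def psi : Localization locAE →+* LL := IsLocalization.lift (S := Localization locAE) phib_units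

-- ### the localization side
abbrev Loc : Type := Localization locAE

lemma memA : tA10 ∈ locAE := Submonoid.subset_closure (Set.mem_insert _ _)
lemma memE : tE10 ∈ locAE :=
  Submonoid.subset_closure (Set.mem_insert_of_mem _ rfl)

noncomputable def lA : Locˣ :=
  (IsLocalization.map_units (M := locAE) Loc ⟨tA10, memA⟩).unit
noncomputable def lE : Locˣ :=
  (IsLocalization.map_units (M := locAE) Loc ⟨tE10, memE⟩).unit

lemma lA_val : (lA : Loc) = algebraMap tateBase10 Loc tA10 := rfl
lemma lE_val : (lE : Loc) = algebraMap tateBase10 Loc tE10 := rfl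

lemma twoE_zero : (2 : tateBase10) * tE10 = 0 := by
  show Ideal.Quotient.mk _ 2 * Ideal.Quotient.mk _ (X 3) = 0
  rw [← map_mul, Ideal.Quotient.eq_zero_iff_mem]
  exact Ideal.subset_span (Set.mem_insert _ _)

lemma rel_zero : tE10 ^ 2 * tV10 - 2 * tA10 * tU10 = 0 := by
  show Ideal.Quotient.mk _ (X 3) ^ 2 * Ideal.Quotient.mk _ (X 2)
      - Ideal.Quotient.mk _ 2 * Ideal.Quotient.mk _ (X 0) * Ideal.Quotient.mk _ (X 1) = 0
  rw [← map_pow, ← map_mul, ← map_mul, ← map_mul, ← map_sub, Ideal.Quotient.eq_zero_iff_mem]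
  exact Ideal.subset_span (Set.mem_insert_of_mem _ rfl)

lemma two_Loc : (2 : Loc) = 0 := by
  have h : (2 : Loc) * (lE : Loc) = 0 := by
    rw [lE_val, show (2:Loc) = algebraMap tateBase10 Loc 2 from (map_ofNat _ 2).symm,
      ← map_mul, twoE_zero, map_zero]
  calc (2 : Loc) = (2 : Loc) * ((lE : Loc) * ((lE⁻¹ : Locˣ) : Loc)) := by
        rw [Units.mul_inv, mul_one]
    _ = ((2 : Loc) * (lE : Loc)) * ((lE⁻¹ : Locˣ) : Loc) := by ring
    _ = 0 := by rw [h, zero_mul]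

lemma v_Loc : algebraMap tateBase10 Loc tV10 = 0 := by
  have h : ((lE : Loc)) ^ 2 * algebraMap tateBase10 Loc tV10 = 0 := by
    have := congrArg (algebraMap tateBase10 Loc) rel_zero
    rw [map_zero, map_sub, map_mul, map_mul, map_mul, map_pow, map_ofNat] at this
    rw [lE_val]
    rw [sub_eq_zero] at this
    rw [this, two_Loc, zero_mul, zero_mul]
  calc algebraMap tateBase10 Loc tV10
      = (((lE⁻¹ : Locˣ) : Loc)) ^ 2 * ((lE : Loc) ^ 2 * algebraMap tateBase10 Loc tV10) := by
        rw [← mul_assoc, ← Units.val_pow_eq_pow_val, ← Units.val_pow_eq_pow_val, ← Units.val_mul,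
          inv_pow, inv_mul_cancel, Units.val_one, one_mul]
    _ = 0 := by rw [h, mul_zero]

noncomputable def psi' : Loc →+* LL := psi

-- monoid hom (ℕ × ℤ × ℤ) → Loc
noncomputable def FF : Multiplicative (ℕ × ℤ × ℤ) →* Loc where
  toFun g := (algebraMap tateBase10 Loc tU10) ^ (Multiplicative.toAdd g).1 *
      ((lA ^ (Multiplicative.toAdd g).2.1 : Locˣ) : Loc) *
      ((lE ^ (Multiplicative.toAdd g).2.2 : Locˣ) : Loc)
  map_one' := by simp
  map_mul' x y := by
    show (algebraMap tateBase10 Loc tU10) ^ ((Multiplicative.toAdd x).1 + (Multiplicative.toAdd y).1) *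
        ((lA ^ ((Multiplicative.toAdd x).2.1 + (Multiplicative.toAdd y).2.1) : Locˣ) : Loc) *
        ((lE ^ ((Multiplicative.toAdd x).2.2 + (Multiplicative.toAdd y).2.2) : Locˣ) : Loc) = _
    rw [pow_add, zpow_add, zpow_add, Units.val_mul, Units.val_mul]
    ring

-- ring hom ZMod 2 → any comm ring with 2 = 0
noncomputable def toSq {S : Type*} [CommRing S] (h : (2 : S) = 0) : ZMod 2 →+* S where
  toFun c := if c = 0 then 0 else 1
  map_one' := by norm_num
  map_zero' := by norm_num
  map_mul' x y := by
    have hx : x = 0 ∨ x = 1 := by revert x; decide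
    have hy : y = 0 ∨ y = 1 := by revert y; decide
    rcases hx with rfl | rfl <;> rcases hy with rfl | rfl <;> norm_num
  map_add' x y := by
    have hx : x = 0 ∨ x = 1 := by revert x; decide
    have hy : y = 0 ∨ y = 1 := by revert y; decide
    have h11 : (1 : ZMod 2) + 1 = 0 := by decide
    rcases hx with rfl | rfl <;> rcases hy with rfl | rfl <;> norm_num
    rw [if_pos (by decide : (2 : ZMod 2) = 0), h]

noncomputable def chi : LL →+* Loc :=
  AddMonoidAlgebra.liftNCRingHom (toSq (S := Loc) two_Loc) FF (fun _ _ => Commute.all (S := Loc) _ _)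

lemma chi_single (g : ℕ × ℤ × ℤ) (b : ZMod 2) :
    chi (AddMonoidAlgebra.single g b) = toSq two_Loc b * FF (Multiplicative.ofAdd g) := by
  simp [chi, AddMonoidAlgebra.liftNCRingHom, AddMonoidAlgebra.liftNC_single]

lemma ringHom_unit_zpow {S T : Type*} [CommRing S] [CommRing T] (f : S →+* T)
    (u : Sˣ) (i : ℤ) : f ((u ^ i : Sˣ) : S) = (((Units.map f.toMonoidHom u) ^ i : Tˣ) : T) := by
  calc f ((u ^ i : Sˣ) : S) = ((Units.map f.toMonoidHom (u ^ i) : Tˣ) : T) :=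
        (Units.coe_map _ _).symm
    _ = _ := by rw [map_zpow]

lemma psi_lA : Units.map psi.toMonoidHom lA = unA := by
  apply Units.ext
  rw [Units.coe_map]
  show psi ((lA : Loc)) = elA
  rw [lA_val]
  exact (IsLocalization.lift_eq (S := Loc) phib_units tA10).trans phib_A

lemma psi_lE : Units.map psi.toMonoidHom lE = unE := by
  apply Units.ext
  rw [Units.coe_map]
  show psi ((lE : Loc)) = elE
  rw [lE_val]
  exact (IsLocalization.lift_eq (S := Loc) phib_units tE10).trans phib_E

lemma psi_u : psi (algebraMap tateBase10 Loc tU10) = elU :=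
  (IsLocalization.lift_eq (S := Loc) phib_units tU10).trans phib_U

lemma hpsichi : psi.comp chi = RingHom.id LL := by
  apply AddMonoidAlgebra.ringHom_ext
  · intro b
    have hb : b = 0 ∨ b = 1 := by revert b; decide
    rcases hb with rfl | rfl
    · rw [AddMonoidAlgebra.single_zero]; simp
    · rw [← AddMonoidAlgebra.one_def]; simp
  · rintro ⟨n, i, j⟩
    rw [RingHom.comp_apply, chi_single, map_one, one_mul]
    show psi ((algebraMap tateBase10 Loc tU10) ^ n * ((lA ^ i : Locˣ) : Loc)
        * ((lE ^ j : Locˣ) : Loc)) = _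
    rw [map_mul, map_mul, map_pow, psi_u, ringHom_unit_zpow (S := Loc) psi lA i, ringHom_unit_zpow (S := Loc) psi lE j,
      psi_lA, psi_lE, unA_zpow, unE_zpow, elU_pow,
      AddMonoidAlgebra.single_mul_single, AddMonoidAlgebra.single_mul_single]
    simp [Prod.ext_iff]

lemma key : chi.comp phib = algebraMap tateBase10 Loc := by
  apply Ideal.Quotient.ringHom_ext
  apply MvPolynomial.ringHom_ext
  · intro r
    exact RingHom.congr_fun
      (RingHom.ext_zmod
        (((chi.comp phib).comp (Ideal.Quotient.mk _)).comp MvPolynomial.C)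
        (((algebraMap tateBase10 Loc).comp (Ideal.Quotient.mk _)).comp MvPolynomial.C)) r
  · intro i
    fin_cases i
    · show chi (phib tA10) = algebraMap tateBase10 Loc tA10
      rw [phib_A, show elA = AddMonoidAlgebra.single ((0:ℕ), (1:ℤ), (0:ℤ)) 1 from rfl,
        chi_single, map_one, one_mul]
      show (algebraMap tateBase10 Loc tU10) ^ (0:ℕ) * ((lA ^ (1:ℤ) : Locˣ) : Loc)
          * ((lE ^ (0:ℤ) : Locˣ) : Loc) = _
      rw [pow_zero, zpow_one, zpow_zero, one_mul, Units.val_one, mul_one, lA_val]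
    · show chi (phib tU10) = algebraMap tateBase10 Loc tU10
      rw [phib_U, show elU = AddMonoidAlgebra.single ((1:ℕ), (0:ℤ), (0:ℤ)) 1 from rfl,
        chi_single, map_one, one_mul]
      show (algebraMap tateBase10 Loc tU10) ^ (1:ℕ) * ((lA ^ (0:ℤ) : Locˣ) : Loc)
          * ((lE ^ (0:ℤ) : Locˣ) : Loc) = _
      rw [pow_one, zpow_zero, zpow_zero, Units.val_one, mul_one, mul_one]
    · show chi (phib tV10) = algebraMap tateBase10 Loc tV10
      rw [phib_V, map_zero, v_Loc]
    · show chi (phib tE10) = algebraMap tateBase10 Loc tE10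
      rw [phib_E, show elE = AddMonoidAlgebra.single ((0:ℕ), (0:ℤ), (1:ℤ)) 1 from rfl,
        chi_single, map_one, one_mul]
      show (algebraMap tateBase10 Loc tU10) ^ (0:ℕ) * ((lA ^ (0:ℤ) : Locˣ) : Loc)
          * ((lE ^ (1:ℤ) : Locˣ) : Loc) = _
      rw [pow_zero, zpow_zero, zpow_one, Units.val_one, one_mul, one_mul, lE_val]

lemma hchipsi : chi.comp psi = RingHom.id Loc := by
  apply IsLocalization.ringHom_ext (S := Loc) locAE
  have h : psi.comp (algebraMap tateBase10 Loc) = phib := IsLocalization.lift_comp (S := Loc) phib_units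
  rw [RingHom.comp_assoc, h, key, RingHom.id_comp]

/-- Let `R = ℤ/4[a^{±}, u, v, e]/(2e, e²v − 2au)`.  Then inverting `e`
yields `R[e⁻¹] ≅ ℤ/2[u, a^{±1}, e^{±1}]` (the latter modeled as the monoid algebra of
`ℕ × ℤ × ℤ` over `ℤ/2`), and the image of `v` in `R[e⁻¹]` is `0`. -/
theorem stmt_10 :
    Nonempty (Localization locAE ≃+* AddMonoidAlgebra (ZMod 2) (ℕ × ℤ × ℤ)) ∧
    algebraMap tateBase10 (Localization locAE) tV10 = 0 := by
  exact ⟨⟨RingEquiv.ofRingHom psi chi hpsichi hchipsi⟩, v_Loc⟩
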